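/- For n ≥ 4, the cycle C_n and the cycle with one chord C_n + e have exactly the same zero forcing sets, and hence the same zero forcing polynomial. -/

import Mathlib

/-- The set of vertices eventually colored ("forced") by the zero forcing process
starting from the initially colored set `S`: a colored vertex with exactly one
uncolored neighbor forces that neighbor to become colored. -/
inductive SimpleGraph.Forced {V : Type*} (G : SimpleGraph V) (S : Set V) : V → Prop
  | mem {v : V} : v ∈ S → G.Forced S v
  | force {u v : V} : G.Adj u v → G.Forced S u →
      (∀ w, G.Adj u w → w ≠ v → G.Forced S w) → G.Forced S v

/-- `S` is a zero forcing set of `G` if the zero forcing process starting from `S`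
colors every vertex. -/
def SimpleGraph.IsZeroForcingSet {V : Type*} (G : SimpleGraph V) (S : Set V) : Prop :=
  ∀ v, G.Forced S v

/-- `z(G;i)`: the number of zero forcing sets of `G` of size `i`. -/
noncomputable def SimpleGraph.zcount {V : Type*} [Fintype V] (G : SimpleGraph V) (i : ℕ) : ℕ :=
  Nat.card {S : Finset V // S.card = i ∧ G.IsZeroForcingSet ↑S}

/-- `Z(G)`: the zero forcing number, the minimum size of a zero forcing set. -/
noncomputable def SimpleGraph.zfNumber {V : Type*} [Fintype V] (G : SimpleGraph V) : ℕ :=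
  sInf {i | ∃ S : Finset V, S.card = i ∧ G.IsZeroForcingSet ↑S}

/-- The zero forcing polynomial `𝒵(G;x) = ∑_{i=1}^n z(G;i) x^i`. -/
noncomputable def SimpleGraph.zfPoly {V : Type*} [Fintype V] (G : SimpleGraph V) : Polynomial ℤ :=
  ∑ i ∈ Finset.Icc 1 (Fintype.card V), Polynomial.C (G.zcount i : ℤ) * Polynomial.X ^ i

/-- The path `P_n` on `n` vertices. -/
def pathG (n : ℕ) : SimpleGraph (Fin n) :=
  SimpleGraph.fromRel (fun i j => (i : ℕ) + 1 = j)

/-- The cycle `C_n` on `n` vertices. -/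
def cycleG (n : ℕ) : SimpleGraph (Fin n) :=
  SimpleGraph.fromRel (fun i j => ((i : ℕ) + 1) % n = j)

namespace ZFSAux

open Fin.NatCast Fin.CommRing

variable {n : ℕ}

lemma val_one' [NeZero n] (hn : 2 ≤ n) : ((1 : Fin n) : ℕ) = 1 := by
  rw [show (1 : Fin n) = ((1:ℕ) : Fin n) by push_cast; rfl, Fin.val_natCast,
    Nat.mod_eq_of_lt hn]

lemma add_one_val [NeZero n] (hn : 2 ≤ n) (a : Fin n) :
    ((a + 1 : Fin n) : ℕ) = ((a : ℕ) + 1) % n := by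
  rw [Fin.val_add, val_one' hn]

lemma mod_cases (x : ℕ) (hx : x < n) :
    (x + 1) % n = x + 1 ∨ ((x + 1) % n = 0 ∧ x + 1 = n) := by
  rcases Nat.lt_or_ge (x + 1) n with h | h
  · exact Or.inl (Nat.mod_eq_of_lt h)
  · have hxn : x + 1 = n := by omega
    right; rw [hxn]; simp [Nat.mod_self]

lemma cycle_adj [NeZero n] (hn : 2 ≤ n) {a b : Fin n} :
    (cycleG n).Adj a b ↔ a ≠ b ∧ (b = a + 1 ∨ a = b + 1) := by
  unfold cycleG
  rw [SimpleGraph.fromRel_adj]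
  have h1 : (((a : ℕ) + 1) % n = (b : ℕ)) ↔ b = a + 1 := by
    rw [Fin.ext_iff, add_one_val hn, eq_comm]
  have h2 : (((b : ℕ) + 1) % n = (a : ℕ)) ↔ a = b + 1 := by
    rw [Fin.ext_iff, add_one_val hn, eq_comm]
  constructor
  · rintro ⟨hne, h | h⟩
    · exact ⟨hne, Or.inl (h1.mp (by exact_mod_cast h))⟩
    · exact ⟨hne, Or.inr (h2.mp (by exact_mod_cast h))⟩
  · rintro ⟨hne, h | h⟩
    · exact ⟨hne, Or.inl (by exact_mod_cast h1.mpr h)⟩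
    · exact ⟨hne, Or.inr (by exact_mod_cast h2.mpr h)⟩

lemma self_ne_add_one [NeZero n] (hn : 2 ≤ n) (a : Fin n) : a ≠ a + 1 := by
  intro h
  have h2 := congrArg Fin.val h
  rw [add_one_val hn] at h2
  rcases mod_cases a.val a.isLt with h3 | ⟨h3, h4⟩ <;> omega

lemma add_two_ne [NeZero n] (hn : 3 ≤ n) (a : Fin n) : a + 1 + 1 ≠ a := by
  intro h
  have h2 := congrArg Fin.val h
  rw [add_one_val (by omega), add_one_val (by omega)] at h2
  rcases mod_cases a.val a.isLt with h3 | ⟨h3, h4⟩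
  · rw [h3] at h2
    have hlt : a.val + 1 < n := by
      have h6 := Nat.mod_lt (a.val + 1) (show 0 < n by omega)
      rw [h3] at h6
      exact h6
    rcases mod_cases (a.val + 1) hlt with h5 | ⟨h5, h6⟩ <;> omega
  · rw [h3] at h2
    rcases mod_cases 0 (show (0:ℕ) < n by omega) with h5 | ⟨h5, h6⟩ <;> omega

lemma self_ne_sub_one [NeZero n] (hn : 2 ≤ n) (a : Fin n) : a ≠ a - 1 := by
  intro h
  exact self_ne_add_one hn (a - 1) (by rw [sub_add_cancel]; exact h.symm)

lemma add_one_ne_sub_one [NeZero n] (hn : 3 ≤ n) (a : Fin n) : a + 1 ≠ a - 1 := by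
  intro h
  exact add_two_ne hn a (by rw [h, sub_add_cancel])

lemma cycle_adj_succ [NeZero n] (hn : 2 ≤ n) (a : Fin n) : (cycleG n).Adj a (a + 1) :=
  (cycle_adj hn).mpr ⟨self_ne_add_one hn a, Or.inl rfl⟩

lemma cycle_adj_pred [NeZero n] (hn : 2 ≤ n) (a : Fin n) : (cycleG n).Adj a (a - 1) := by
  exact (cycle_adj hn).mpr ⟨self_ne_sub_one hn a, Or.inr (by rw [sub_add_cancel])⟩

/-- If `S` contains no two cycle-consecutive vertices, nothing outside `S` is ever forced,
for any graph containing the cycle. -/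
lemma noPair [NeZero n] (hn : 3 ≤ n) {G : SimpleGraph (Fin n)} (hG : cycleG n ≤ G)
    {S : Set (Fin n)} (hS : ∀ i : Fin n, i ∈ S → i + 1 ∉ S) :
    ∀ w, G.Forced S w → w ∈ S := by
  intro w hw
  induction hw with
  | mem h => exact h
  | @force a b hadj ha hall iha ihall =>
    exfalso
    by_cases hb : a + 1 = b
    · have hw0 : a - 1 ∈ S := by
        refine ihall (a - 1) (hG (cycle_adj_pred (by omega) a)) ?_
        rw [← hb]; exact (add_one_ne_sub_one hn a).symm
      exact hS (a - 1) hw0 (by rw [sub_add_cancel]; exact iha)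
    · have hw0 : a + 1 ∈ S := ihall (a + 1) (hG (cycle_adj_succ (by omega) a)) hb
      exact hS a iha hw0

lemma cycle_step [NeZero n] (hn : 2 ≤ n) {S : Set (Fin n)} {a : Fin n}
    (ha : (cycleG n).Forced S a) (hprev : (cycleG n).Forced S (a - 1)) :
    (cycleG n).Forced S (a + 1) := by
  refine SimpleGraph.Forced.force (cycle_adj_succ hn a) ha ?_
  intro w hw hne
  rcases ((cycle_adj hn).mp hw).2 with h | h
  · exact absurd h hne
  · rw [show w = a - 1 by rw [h, add_sub_cancel_right]]
    exact hprev

lemma pair_zfs_cycle [NeZero n] (hn : 2 ≤ n) {S : Set (Fin n)} {i : Fin n}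
    (h0 : i ∈ S) (h1 : i + 1 ∈ S) : (cycleG n).IsZeroForcingSet S := by
  have key : ∀ k : ℕ, (cycleG n).Forced S (i + (k : Fin n)) ∧
      (cycleG n).Forced S (i + (k : Fin n) + 1) := by
    intro k
    induction k with
    | zero => simpa using ⟨SimpleGraph.Forced.mem h0, SimpleGraph.Forced.mem h1⟩
    | succ k ih =>
      have hc : ((k + 1 : ℕ) : Fin n) = (k : Fin n) + 1 := by push_cast; ring
      rw [hc, ← add_assoc]
      exact ⟨ih.2, cycle_step hn ih.2 (by rw [add_sub_cancel_right]; exact ih.1)⟩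
  intro w
  have := (key ((w - i).val)).1
  rwa [Fin.cast_val_eq_self, add_sub_cancel] at this

section Chord

variable [NeZero n] (u v : Fin n)

lemma chord_adj {a b : Fin n} (huv : u ≠ v) :
    (cycleG n ⊔ SimpleGraph.fromEdgeSet {s(u, v)}).Adj a b ↔
      (cycleG n).Adj a b ∨ ((a = u ∧ b = v) ∨ (a = v ∧ b = u)) := by
  simp only [SimpleGraph.sup_adj, SimpleGraph.fromEdgeSet_adj, Set.mem_singleton_iff,
    Sym2.eq_iff]
  constructor
  · rintro (h | ⟨h, _⟩)
    · exact Or.inl h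
    · exact Or.inr h
  · rintro (h | ⟨rfl, rfl⟩ | ⟨rfl, rfl⟩)
    · exact Or.inl h
    · exact Or.inr ⟨Or.inl ⟨rfl, rfl⟩, huv⟩
    · exact Or.inr ⟨Or.inr ⟨rfl, rfl⟩, huv.symm⟩

lemma chord_le : cycleG n ≤ cycleG n ⊔ SimpleGraph.fromEdgeSet {s(u, v)} := le_sup_left

lemma chord_step_fwd (hn : 2 ≤ n) (huv : u ≠ v) {S : Set (Fin n)} {a : Fin n}
    (hau : a ≠ u) (hav : a ≠ v)
    (ha : (cycleG n ⊔ SimpleGraph.fromEdgeSet {s(u, v)}).Forced S a)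
    (hprev : (cycleG n ⊔ SimpleGraph.fromEdgeSet {s(u, v)}).Forced S (a - 1)) :
    (cycleG n ⊔ SimpleGraph.fromEdgeSet {s(u, v)}).Forced S (a + 1) := by
  refine SimpleGraph.Forced.force (chord_le u v (cycle_adj_succ hn a)) ha ?_
  intro w hw hne
  rcases (chord_adj u v huv).mp hw with h | ⟨h, _⟩ | ⟨h, _⟩
  · rcases ((cycle_adj hn).mp h).2 with h2 | h2
    · exact absurd h2 hne
    · rw [show w = a - 1 by rw [h2, add_sub_cancel_right]]; exact hprev
  · exact absurd h hau
  · exact absurd h hav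

lemma chord_step_bwd (hn : 2 ≤ n) (huv : u ≠ v) {S : Set (Fin n)} {a : Fin n}
    (hau : a ≠ u) (hav : a ≠ v)
    (ha : (cycleG n ⊔ SimpleGraph.fromEdgeSet {s(u, v)}).Forced S a)
    (hprev : (cycleG n ⊔ SimpleGraph.fromEdgeSet {s(u, v)}).Forced S (a + 1)) :
    (cycleG n ⊔ SimpleGraph.fromEdgeSet {s(u, v)}).Forced S (a - 1) := by
  refine SimpleGraph.Forced.force (chord_le u v (cycle_adj_pred hn a)) ha ?_
  intro w hw hne
  rcases (chord_adj u v huv).mp hw with h | ⟨h, _⟩ | ⟨h, _⟩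
  · rcases ((cycle_adj hn).mp h).2 with h2 | h2
    · rw [h2]; exact hprev
    · exact absurd (show w = a - 1 by rw [h2, add_sub_cancel_right]) hne
  · exact absurd h hau
  · exact absurd h hav

lemma chord_step_u (hn : 2 ≤ n) (huv : u ≠ v) {S : Set (Fin n)}
    (hu : (cycleG n ⊔ SimpleGraph.fromEdgeSet {s(u, v)}).Forced S u)
    (hum : (cycleG n ⊔ SimpleGraph.fromEdgeSet {s(u, v)}).Forced S (u - 1))
    (hv : (cycleG n ⊔ SimpleGraph.fromEdgeSet {s(u, v)}).Forced S v) :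
    (cycleG n ⊔ SimpleGraph.fromEdgeSet {s(u, v)}).Forced S (u + 1) := by
  refine SimpleGraph.Forced.force (chord_le u v (cycle_adj_succ hn u)) hu ?_
  intro w hw hne
  rcases (chord_adj u v huv).mp hw with h | ⟨_, h⟩ | ⟨h, _⟩
  · rcases ((cycle_adj hn).mp h).2 with h2 | h2
    · exact absurd h2 hne
    · rw [show w = u - 1 by rw [h2, add_sub_cancel_right]]; exact hum
  · rw [h]; exact hv
  · exact absurd h huv

end Chord

lemma natCast_fin_eq_iff [NeZero n] {k m : ℕ} (hk : k < n) (hm : m < n) :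
    ((k : Fin n) = (m : Fin n)) ↔ k = m := by
  rw [Fin.ext_iff, Fin.val_natCast, Fin.val_natCast, Nat.mod_eq_of_lt hk, Nat.mod_eq_of_lt hm]

lemma natCast_fin_zero_iff [NeZero n] {k : ℕ} : ((k : Fin n) = 0) ↔ n ∣ k := by
  rw [Fin.ext_iff, Fin.val_natCast]
  simp [Nat.dvd_iff_mod_eq_zero]

/-- `i - k = i + 1 + m` iff `n ∣ k + m + 1`. -/
lemma sub_eq_pos_iff [NeZero n] (i : Fin n) (k m : ℕ) :
    (i - (k : Fin n) = i + 1 + (m : Fin n)) ↔ n ∣ (k + m + 1) := by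
  rw [← sub_eq_zero]
  have hrw : (i - (k : Fin n)) - (i + 1 + (m : Fin n)) = -(((k + m + 1 : ℕ) : Fin n)) := by
    push_cast; ring
  rw [hrw, neg_eq_zero, natCast_fin_zero_iff]

lemma pair_zfs_chord [NeZero n] (hn : 3 ≤ n) {u v : Fin n} (huv : u ≠ v) {S : Set (Fin n)}
    {i : Fin n} (h0 : i ∈ S) (h1 : i + 1 ∈ S)
    (hpq : (u - (i + 1)).val < (v - (i + 1)).val) :
    (cycleG n ⊔ SimpleGraph.fromEdgeSet {s(u, v)}).IsZeroForcingSet S := by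
  set G' := cycleG n ⊔ SimpleGraph.fromEdgeSet {s(u, v)} with hG'
  have hn2 : 2 ≤ n := by omega
  set p := (u - (i + 1)).val with hp
  set q := (v - (i + 1)).val with hq
  have hqn : q < n := (v - (i + 1)).isLt
  have hu : u = i + 1 + (p : Fin n) := by
    rw [hp, Fin.cast_val_eq_self, add_sub_cancel]
  have hv : v = i + 1 + (q : Fin n) := by
    rw [hq, Fin.cast_val_eq_self, add_sub_cancel]
  -- position k of the cycle
  have hpos_ne_u : ∀ k : ℕ, k < n → k ≠ p → i + 1 + (k : Fin n) ≠ u := by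
    intro k hkn hkp h
    rw [hu] at h
    exact hkp ((natCast_fin_eq_iff hkn (by omega)).mp (by exact add_left_cancel h))
  have hpos_ne_v : ∀ k : ℕ, k < n → k ≠ q → i + 1 + (k : Fin n) ≠ v := by
    intro k hkn hkq h
    rw [hv] at h
    exact hkq ((natCast_fin_eq_iff hkn hqn).mp (by exact add_left_cancel h))
  have hpos_succ : ∀ k : ℕ, i + 1 + ((k + 1 : ℕ) : Fin n) = i + 1 + (k : Fin n) + 1 := by
    intro k; push_cast; ring
  have hpos_prev : ∀ k : ℕ, i + 1 + (k : Fin n) - 1 = i + (k : Fin n) := by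
    intro k; ring
  -- Claim A: forward chain up to u
  have claimA : ∀ k : ℕ, k ≤ p → G'.Forced S (i + 1 + (k : Fin n)) := by
    intro k
    induction k using Nat.strong_induction_on with
    | _ k ih =>
      match k with
      | 0 => intro _; simpa using SimpleGraph.Forced.mem h1
      | (k + 1) =>
        intro hk1
        rw [hpos_succ k]
        refine chord_step_fwd u v hn2 huv
          (hpos_ne_u k (by omega) (by omega)) (hpos_ne_v k (by omega) (by omega))
          (ih k (by omega) (by omega)) ?_
        rw [hpos_prev k]
        match k with
        | 0 => simpa using SimpleGraph.Forced.mem h0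
        | (m + 1) =>
          rw [show i + ((m + 1 : ℕ) : Fin n) = i + 1 + (m : Fin n) by push_cast; ring]
          exact ih m (by omega) (by omega)
  -- Claim B: backward chain down to v
  have claimB : ∀ k : ℕ, k ≤ n - 1 - q → G'.Forced S (i - (k : Fin n)) := by
    intro k
    induction k using Nat.strong_induction_on with
    | _ k ih =>
      match k with
      | 0 => intro _; simpa using SimpleGraph.Forced.mem h0
      | (k + 1) =>
        intro hk1
        have hstep : i - ((k + 1 : ℕ) : Fin n) = i - (k : Fin n) - 1 := by push_cast; ring
        rw [hstep]
        have haneu : i - (k : Fin n) ≠ u := by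
          intro h
          rw [hu] at h
          have := (sub_eq_pos_iff i k p).mp h
          have := Nat.le_of_dvd (by omega) this
          omega
        have hanev : i - (k : Fin n) ≠ v := by
          intro h
          rw [hv] at h
          have := (sub_eq_pos_iff i k q).mp h
          have := Nat.le_of_dvd (by omega) this
          omega
        refine chord_step_bwd u v hn2 huv haneu hanev (ih k (by omega) (by omega)) ?_
        match k with
        | 0 => simpa using SimpleGraph.Forced.mem h1
        | (m + 1) =>
          rw [show i - ((m + 1 : ℕ) : Fin n) + 1 = i - (m : Fin n) by push_cast; ring]
          exact ih m (by omega) (by omega)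
  -- v is forced (endpoint of claim B)
  have hvf : G'.Forced S v := by
    have := claimB (n - 1 - q) le_rfl
    rwa [show i - ((n - 1 - q : ℕ) : Fin n) = v by
      rw [hv, sub_eq_pos_iff]
      exact ⟨1, by omega⟩] at this
  -- u is forced (endpoint of claim A)
  have huf : G'.Forced S u := by
    have := claimA p le_rfl
    rwa [← hu] at this
  -- u - 1 is forced
  have humf : G'.Forced S (u - 1) := by
    rcases Nat.eq_zero_or_pos p with hp0 | hp0
    · have heq : u - 1 = i := by rw [hu, hp0]; push_cast; ring
      rw [heq]; exact SimpleGraph.Forced.mem h0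
    · obtain ⟨m, hm⟩ : ∃ m, p = m + 1 := ⟨p - 1, by omega⟩
      have heq : u - 1 = i + 1 + (m : Fin n) := by rw [hu, hm]; push_cast; ring
      rw [heq]; exact claimA m (by omega)
  -- Claim C: middle chain from u+1 to v
  have claimC : ∀ k : ℕ, k ≤ q - p → G'.Forced S (i + 1 + ((p + k : ℕ) : Fin n)) := by
    intro k
    induction k using Nat.strong_induction_on with
    | _ k ih =>
      match k with
      | 0 => intro _; simpa [← hu] using huf
      | 1 =>
        intro _
        rw [show i + 1 + ((p + 1 : ℕ) : Fin n) = u + 1 by rw [hu]; push_cast; ring]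
        exact chord_step_u u v hn2 huv huf humf hvf
      | (k + 2) =>
        intro hk2
        rw [show i + 1 + ((p + (k + 2) : ℕ) : Fin n) = i + 1 + ((p + (k + 1) : ℕ) : Fin n) + 1 by
          push_cast; ring]
        refine chord_step_fwd u v hn2 huv
          (hpos_ne_u (p + (k + 1)) (by omega) (by omega))
          (hpos_ne_v (p + (k + 1)) (by omega) (by omega))
          (ih (k + 1) (by omega) (by omega)) ?_
        rw [show i + 1 + ((p + (k + 1) : ℕ) : Fin n) - 1 = i + 1 + ((p + k : ℕ) : Fin n) by
          push_cast; ring]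
        exact ih k (by omega) (by omega)
  -- coverage
  intro w
  have hwn : (w - (i + 1)).val < n := (w - (i + 1)).isLt
  have hw : w = i + 1 + (((w - (i + 1)).val : ℕ) : Fin n) := by
    rw [Fin.cast_val_eq_self, add_sub_cancel]
  set m := (w - (i + 1)).val with hm
  rcases Nat.lt_or_ge p m with hpm | hpm
  · rcases Nat.lt_or_ge q m with hqm | hqm
    · -- q < m : use claim B with k = n - 1 - m
      have := claimB (n - 1 - m) (by omega)
      rwa [show i - ((n - 1 - m : ℕ) : Fin n) = w by
        rw [hw, sub_eq_pos_iff]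
        exact ⟨1, by omega⟩] at this
    · -- p < m ≤ q : use claim C with k = m - p
      have := claimC (m - p) (by omega)
      rwa [show (p + (m - p) : ℕ) = m by omega, ← hw] at this
  · -- m ≤ p : claim A
    have := claimA m hpm
    rwa [← hw] at this

end ZFSAux

open ZFSAux

/-- For `n ≥ 4`, the cycle `C_n` and the chorded cycle `C_n + e` (one chord
`uv` between nonadjacent cycle vertices) have exactly the same zero forcing sets, and
hence the same zero forcing polynomial. -/
theorem cycle_chord_same_zfs (n : ℕ) (hn : 4 ≤ n) (u v : Fin n) (huv : u ≠ v)
    (hna : ¬ (cycleG n).Adj u v) :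
    (∀ S : Set (Fin n), (cycleG n).IsZeroForcingSet S ↔
      (cycleG n ⊔ SimpleGraph.fromEdgeSet {s(u, v)}).IsZeroForcingSet S) ∧
    (cycleG n).zfPoly = (cycleG n ⊔ SimpleGraph.fromEdgeSet {s(u, v)}).zfPoly := by
  haveI : NeZero n := ⟨by omega⟩
  have hn3 : 3 ≤ n := by omega
  have hn2 : 2 ≤ n := by omega
  -- any ZFS (of a graph containing the cycle) contains a consecutive pair
  have getPair : ∀ {G : SimpleGraph (Fin n)}, cycleG n ≤ G → ∀ {S : Set (Fin n)},
      G.IsZeroForcingSet S → ∃ i : Fin n, i ∈ S ∧ i + 1 ∈ S := by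
    intro G hG S hS
    by_contra hcon
    push_neg at hcon
    have h0 : (0 : Fin n) ∈ S := noPair hn3 hG hcon 0 (hS 0)
    have h1 : (0 : Fin n) + 1 ∈ S := noPair hn3 hG hcon (0 + 1) (hS (0 + 1))
    exact hcon 0 h0 h1
  -- a consecutive pair forces everything in the chorded cycle
  have pairChord : ∀ {S : Set (Fin n)}, (∃ i : Fin n, i ∈ S ∧ i + 1 ∈ S) →
      (cycleG n ⊔ SimpleGraph.fromEdgeSet {s(u, v)}).IsZeroForcingSet S := by
    rintro S ⟨i, h0, h1⟩
    have hpq : (u - (i + 1)).val ≠ (v - (i + 1)).val := by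
      intro h
      apply huv
      have : u - (i + 1) = v - (i + 1) := Fin.ext h
      have := congrArg (· + (i + 1)) this
      simpa [sub_add_cancel] using this
    rcases Nat.lt_or_ge ((u - (i + 1)).val) ((v - (i + 1)).val) with h | h
    · exact pair_zfs_chord hn3 huv h0 h1 h
    · have h' : (v - (i + 1)).val < (u - (i + 1)).val := by omega
      rw [show s(u, v) = s(v, u) from Sym2.eq_swap]
      exact pair_zfs_chord hn3 huv.symm h0 h1 h'
  have main : ∀ S : Set (Fin n), (cycleG n).IsZeroForcingSet S ↔
      (cycleG n ⊔ SimpleGraph.fromEdgeSet {s(u, v)}).IsZeroForcingSet S := by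
    intro S
    constructor
    · intro h
      exact pairChord (getPair le_rfl h)
    · intro h
      obtain ⟨i, h0, h1⟩ := getPair le_sup_left h
      exact pair_zfs_cycle hn2 h0 h1
  refine ⟨main, ?_⟩
  have hz : ∀ i, (cycleG n).zcount i
      = (cycleG n ⊔ SimpleGraph.fromEdgeSet {s(u, v)}).zcount i := by
    intro i
    unfold SimpleGraph.zcount
    exact Nat.card_congr (Equiv.subtypeEquivRight fun S =>
      and_congr_right fun _ => main ↑S)
  unfold SimpleGraph.zfPoly
  exact Finset.sum_congr rfl fun i _ => by rw [hz i]
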